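/- Let H be a modular hyperplane of a matroid M with complementary cocircuit C* = E(M)−H, let (F_1,F_2) be a vertical cover of M|H, and let P be the union of projections P_H(x,y) over all distinct rank-one flats x, y contained in C*. Then P ⊆ F_i for some i ∈ {1,2}, and (F_i ∪ C*, F_{3−i}) is a vertical cover of M. Moreover, if (F_1,F_2) is a modular cover of M|H, then (F_i ∪ C*, F_{3−i}) is a modular cover of M. -/

import Mathlib

open Set

namespace Matroid

variable {α : Type*} {β : Type*}

/-- The rank of a set in a matroid: the supremum of sizes of independent subsets. -/
noncomputable def mRank (M : Matroid α) (X : Set α) : ℕ :=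
  sSup {n : ℕ | ∃ I, M.Indep I ∧ I ⊆ X ∧ I.ncard = n}

/-- The rank of a matroid. -/
noncomputable def mRk (M : Matroid α) : ℕ := M.mRank M.E

/-- A flat `F` is modular if `r F + r F' = r (F ∪ F') + r (F ∩ F')` for every flat `F'`. -/
def IsModularFlat (M : Matroid α) (F : Set α) : Prop :=
  M.IsFlat F ∧ ∀ F', M.IsFlat F' →
    M.mRank F + M.mRank F' = M.mRank (F ∪ F') + M.mRank (F ∩ F')

/-- A proper flat is a flat other than the ground set. -/
def IsProperFlat (M : Matroid α) (F : Set α) : Prop := M.IsFlat F ∧ F ≠ M.E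

/-- A vertical cover is a pair of proper flats whose union is the ground set. -/
def VerticalCover (M : Matroid α) (F F' : Set α) : Prop :=
  M.IsProperFlat F ∧ M.IsProperFlat F' ∧ F ∪ F' = M.E

/-- A modular cover is a vertical cover by two modular flats. -/
def ModularCover (M : Matroid α) (F F' : Set α) : Prop :=
  M.VerticalCover F F' ∧ M.IsModularFlat F ∧ M.IsModularFlat F'

/-- A matroid is round if it has no vertical cover. -/
def Round (M : Matroid α) : Prop := ∀ F F', ¬ M.VerticalCover F F'

/-- A subset of the ground set is round if the restriction to it is round. -/
def RoundSet (M : Matroid α) (X : Set α) : Prop := X ⊆ M.E ∧ (M ↾ X).Round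

/-- A rotunda is a maximal round flat. -/
def Rotunda (M : Matroid α) (R : Set α) : Prop :=
  M.IsFlat R ∧ M.RoundSet R ∧ ∀ R', M.IsFlat R' → M.RoundSet R' → R ⊆ R' → R' = R

/-- A matroid of rank `r` is supersolvable if there is a chain of modular flats
`F 0 ⊆ F 1 ⊆ ⋯ ⊆ F r` with `r (F i) = i` for each `i`. -/
def Supersolvable (M : Matroid α) : Prop :=
  ∃ F : ℕ → Set α, (∀ i ≤ M.mRk, M.IsModularFlat (F i) ∧ M.mRank (F i) = i) ∧
    ∀ i < M.mRk, F i ⊆ F (i + 1)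

/-- A matroid is saturated if every round flat is modular. -/
def Saturated (M : Matroid α) : Prop :=
  ∀ F, M.IsFlat F → M.RoundSet F → M.IsModularFlat F

/-- A circuit: a minimal dependent subset of the ground set. -/
def Circ (M : Matroid α) (C : Set α) : Prop :=
  C ⊆ M.E ∧ ¬ M.Indep C ∧ ∀ D ⊂ C, M.Indep D

/-- A matroid is connected if it is non-empty and every two distinct elements lie in a
common circuit. -/
def ConnectedM (M : Matroid α) : Prop :=
  M.E.Nonempty ∧ ∀ x ∈ M.E, ∀ y ∈ M.E, x = y ∨ ∃ C, M.Circ C ∧ x ∈ C ∧ y ∈ C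

/-- A hyperplane: a flat of rank `r M - 1`. -/
def IsHyperplane (M : Matroid α) (H : Set α) : Prop :=
  M.IsFlat H ∧ M.mRank H + 1 = M.mRk

/-- The union of the projections `P_H(x, y) = H ∩ cl (x ∪ y)` onto the modular hyperplane `H`,
taken over all pairs of distinct rank-one flats `x = cl {a}`, `y = cl {b}` spanned by
elements `a, b` of `X`. -/
def projUnion (M : Matroid α) (H X : Set α) : Set α :=
  ⋃ a ∈ X, ⋃ b ∈ X, ⋃ (_ : M.closure {a} ≠ M.closure {b}), H ∩ M.closure {a, b}

/-- Two elements are related if they are equal or lie in a common circuit; the connected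
components of a matroid are the restrictions to the equivalence classes of this relation. -/
def connRel (M : Matroid α) (x y : α) : Prop :=
  x = y ∨ ∃ C, M.Circ C ∧ x ∈ C ∧ y ∈ C

/-- The rotunda graph of a matroid: vertices are the rotunda; two rotunda are adjacent if
they intersect and there is a modular cover separating them at their intersection. -/
def rotundaGraph (M : Matroid α) : SimpleGraph {R : Set α // M.Rotunda R} where
  Adj R₁ R₂ := R₁ ≠ R₂ ∧ (R₁.1 ∩ R₂.1).Nonempty ∧
    ∃ F₁ F₂, M.ModularCover F₁ F₂ ∧ R₁.1 ⊆ F₁ ∧ R₂.1 ⊆ F₂ ∧ F₁ ∩ F₂ = R₁.1 ∩ R₂.1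
  symm := ⟨by
    rintro a b ⟨hne, hint, F₁, F₂, ⟨⟨hp1, hp2, hu⟩, hm1, hm2⟩, h1, h2, hi⟩
    refine ⟨hne.symm, by rwa [Set.inter_comm], F₂, F₁,
      ⟨⟨hp2, hp1, by rwa [Set.union_comm]⟩, hm2, hm1⟩, h2, h1, ?_⟩
    rw [Set.inter_comm, hi, Set.inter_comm]⟩
  loopless := ⟨fun a h => h.1 rfl⟩

/-- A rotunda tree of `M`: a tree on the rotunda of `M` such that for each element `x` of the
ground set, the rotunda containing `x` induce a (nonempty) subtree. -/
def IsRotundaTree (M : Matroid α) (T : SimpleGraph {R : Set α // M.Rotunda R}) : Prop :=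
  T.IsTree ∧ ∀ x ∈ M.E, (T.induce {t : {R : Set α // M.Rotunda R} | x ∈ t.1}).Connected

/-- A legitimate weighting of `M`: zero on the empty set, and strictly monotone under proper
inclusion on the set consisting of `∅` and the pairwise intersections of distinct rotunda. -/
def LegitimateWeighting (M : Matroid α) (σ : Set α → ℕ) : Prop :=
  σ ∅ = 0 ∧
  ∀ X X' : Set α,
    (X = ∅ ∨ ∃ R R', M.Rotunda R ∧ M.Rotunda R' ∧ R ≠ R' ∧ X = R ∩ R') →
    (X' = ∅ ∨ ∃ R R', M.Rotunda R ∧ M.Rotunda R' ∧ R ≠ R' ∧ X' = R ∩ R') →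
    X ⊂ X' → σ X < σ X'

/-- The total weight of a graph on the rotunda of `M`, where the edge joining rotunda
`R` and `R'` gets weight `σ (R ∩ R')`. -/
noncomputable def treeWeight {M : Matroid α} (σ : Set α → ℕ)
    (T : SimpleGraph {R : Set α // M.Rotunda R}) : ℕ :=
  ∑ᶠ e ∈ T.edgeSet,
    Sym2.lift ⟨fun a b => σ (a.1 ∩ b.1), fun a b => by simp [Set.inter_comm]⟩ e

/-- A tree-decomposition of a matroid: a tree together with bags covering the ground set. -/
def IsTreeDecomp (M : Matroid α) (T : SimpleGraph β) (τ : β → Set α) : Prop :=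
  T.IsTree ∧ ∀ x ∈ M.E, ∃ t, x ∈ τ t

/-- The node-width of a node `t` in a tree-decomposition `(T, τ)` of `M`:
`(Σ_i r (τ t ∪ ⋃_{k ≠ i} F_k)) − (d − 1) · r M`, where `F_1, …, F_d` are the unions of the
bags over the connected components of `T − t`. -/
noncomputable def nodeWidth (M : Matroid α) (T : SimpleGraph β) (τ : β → Set α) (t : β) : ℤ :=
  (∑ᶠ c : (T.induce {s : β | s ≠ t}).ConnectedComponent,
      (M.mRank (τ t ∪ ⋃ (s : {s : β // s ≠ t})
        (_ : (T.induce {s : β | s ≠ t}).connectedComponentMk s ≠ c), τ s.1) : ℤ))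
    - ((Nat.card (T.induce {s : β | s ≠ t}).ConnectedComponent : ℤ) - 1) * (M.mRk : ℤ)

/-- The width of a tree-decomposition: the maximum node-width. -/
noncomputable def decompWidth (M : Matroid α) (T : SimpleGraph β) (τ : β → Set α) : ℤ :=
  sSup (Set.range (M.nodeWidth T τ))

/-- The tree-width of a matroid: the minimum width of a (finite) tree-decomposition. -/
noncomputable def treeWidth (M : Matroid α) : ℕ :=
  sInf {n : ℕ | ∃ (β : Type) (T : SimpleGraph β) (τ : β → Set α),
    Finite β ∧ M.IsTreeDecomp T τ ∧ ∀ t, M.nodeWidth T τ t ≤ (n : ℤ)}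

end Matroid

namespace SimpleGraph

/-- A graph is chordal if every cycle with at least four edges has a chord: an edge of the
graph joining two vertices of the cycle that is not an edge of the cycle. -/
def IsChordal {V : Type*} (G : SimpleGraph V) : Prop :=
  ∀ ⦃v : V⦄ (w : G.Walk v v), w.IsCycle → 4 ≤ w.length →
    ∃ x y, x ∈ w.support ∧ y ∈ w.support ∧ G.Adj x y ∧ s(x, y) ∉ w.edges

/-- A maximal clique of a graph. -/
def MaxClique {V : Type*} (G : SimpleGraph V) (C : Set V) : Prop :=
  G.IsClique C ∧ ∀ D, G.IsClique D → C ⊆ D → D = C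

/-- The reduced clique graph of a graph: vertices are the maximal cliques; two maximal
cliques are adjacent if they intersect and every walk from one side to the other passes
through their intersection. -/
def reducedCliqueGraph {V : Type*} (G : SimpleGraph V) :
    SimpleGraph {C : Set V // G.MaxClique C} where
  Adj C₁ C₂ := C₁ ≠ C₂ ∧ (C₁.1 ∩ C₂.1).Nonempty ∧
    ∀ u ∈ C₁.1 \ C₂.1, ∀ v ∈ C₂.1 \ C₁.1, ∀ p : G.Walk u v,
      ∃ z ∈ p.support, z ∈ C₁.1 ∩ C₂.1
  symm := ⟨by
    rintro a b ⟨hne, hint, hsep⟩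
    refine ⟨hne.symm, by rwa [Set.inter_comm], fun u hu v hv p => ?_⟩
    obtain ⟨z, hz, hz2⟩ := hsep v hv u hu p.reverse
    refine ⟨z, ?_, by rwa [Set.inter_comm]⟩
    simpa [SimpleGraph.Walk.support_reverse] using hz⟩
  loopless := ⟨fun a h => h.1 rfl⟩

end SimpleGraph

open Matroid

/-!
Write `P(a, b) = H ∩ cl {a, b}` for `a, b ∉ H`. As `H` is a modular hyperplane,
`cl {a, b} = cl (P(a, b) ∪ {a})`; as `H` is a flat, `H ∩ cl (G ∪ {a}) = G` for every flat `G ⊆ H`.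
Hence for a flat `F ⊆ H` the relation `P(a, b) ⊆ F` is symmetric and transitive on `E − H`, and
every `P(a, b)`, a flat of rank at most one, lies in `F₁` or in `F₂`. If two symmetric transitive
relations together relate every pair, one of them alone does, so all projections lie in one `Fᵢ`.
Then `Fᵢ ∪ C* = cl (Fᵢ ∪ {a})` for any `a ∈ C*`, a flat meeting `H` in `Fᵢ`, of rank `r Fᵢ + 1`.
Modularity passes from `M ↾ H` to `M` by submodularity: for `F₃₋ᵢ` using that `H` is modular, for
`Fᵢ ∪ C*` by splitting a flat `F'` into its traces on `Fᵢ ∪ C*` and on `H`.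
-/

theorem forall_or_forall_of_symm_of_trans {α : Type*} {S : Set α} {r s : α → α → Prop}
    (hrs : ∀ a ∈ S, ∀ b ∈ S, r a b ∨ s a b)
    (hr_symm : ∀ a b, r a b → r b a) (hs_symm : ∀ a b, s a b → s b a)
    (hr_trans : ∀ a ∈ S, ∀ b ∈ S, ∀ c ∈ S, r a b → r b c → r a c)
    (hs_trans : ∀ a ∈ S, ∀ b ∈ S, ∀ c ∈ S, s a b → s b c → s a c) :
    (∀ a ∈ S, ∀ b ∈ S, r a b) ∨ (∀ a ∈ S, ∀ b ∈ S, s a b) := by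
  have adjacent : ∀ x ∈ S, ∀ y ∈ S, ∀ z ∈ S, ¬ r x y → ¬ s y z → False := by
    intro x hx y hy z hz hxy hyz
    rcases hrs x hx z hz with hxz | hxz
    · exact hxy (hr_trans x hx z hz y hy hxz (hr_symm _ _ ((hrs y hy z hz).resolve_right hyz)))
    · exact hyz (hs_trans y hy x hx z hz (hs_symm _ _ ((hrs x hx y hy).resolve_left hxy)) hxz)
  by_contra! ⟨⟨a, ha, b, hb, hab⟩, ⟨c, hc, d, hd, hcd⟩⟩
  by_cases hbc : r b c
  · refine adjacent a ha c hc d hd (fun hac ↦ hab ?_) hcd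
    exact hr_trans a ha c hc b hb hac (hr_symm _ _ hbc)
  · exact adjacent b hb c hc d hd hbc hcd

namespace Matroid

variable {α : Type*} {M : Matroid α} {X Y H F F' F₁ F₂ G K : Set α} {a b c e : α}

section Rank

variable [M.RankFinite]

lemma coe_mRank (M : Matroid α) [M.RankFinite] (X : Set α) : (M.mRank X : ℕ∞) = M.eRk X := by
  obtain ⟨I, hI⟩ := M.exists_isBasis' X
  have hIfin : I.Finite := hI.indep.finite
  suffices M.mRank X = I.ncard by rw [this, hIfin.cast_ncard_eq, hI.encard_eq_eRk]
  refine IsGreatest.csSup_eq ⟨⟨I, hI.indep, hI.subset, rfl⟩, ?_⟩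
  rintro n ⟨J, hJ, hJX, rfl⟩
  have hJI : J.encard ≤ I.encard := hI.encard_eq_eRk ▸ hJ.encard_le_eRk_of_subset hJX
  rwa [← hJ.finite.cast_ncard_eq, ← hIfin.cast_ncard_eq, Nat.cast_le] at hJI

lemma mRank_mono (hXY : X ⊆ Y) : M.mRank X ≤ M.mRank Y := by
  have := M.eRk_mono hXY
  rwa [← coe_mRank, ← coe_mRank, Nat.cast_le] at this

lemma mRank_inter_add_mRank_union_le (M : Matroid α) [M.RankFinite] (X Y : Set α) :
    M.mRank (X ∩ Y) + M.mRank (X ∪ Y) ≤ M.mRank X + M.mRank Y := by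
  have := M.eRk_inter_add_eRk_union_le X Y
  rwa [← coe_mRank, ← coe_mRank, ← coe_mRank, ← coe_mRank, ← Nat.cast_add, ← Nat.cast_add,
    Nat.cast_le] at this

lemma mRank_closure_eq (M : Matroid α) [M.RankFinite] (X : Set α) :
    M.mRank (M.closure X) = M.mRank X := by
  have := M.eRk_closure_eq X
  rwa [← coe_mRank, ← coe_mRank, Nat.cast_inj] at this

lemma mRank_insert_eq_add_one (he : e ∈ M.E \ M.closure X) :
    M.mRank (insert e X) = M.mRank X + 1 := by
  have := eRk_insert_eq_add_one he
  rwa [← coe_mRank, ← coe_mRank, ← Nat.cast_one, ← Nat.cast_add, Nat.cast_inj] at this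

lemma closure_eq_closure_of_subset_of_mRank_le (hXY : X ⊆ Y) (hr : M.mRank Y ≤ M.mRank X) :
    M.closure X = M.closure Y :=
  (M.isRkFinite_set X).closure_eq_closure_of_subset_of_eRk_ge_eRk hXY
    (by rw [← coe_mRank, ← coe_mRank]; exact_mod_cast hr)

lemma restrict_mRank_eq {R : Set α} (hXR : X ⊆ R) : (M ↾ R).mRank X = M.mRank X := by
  have := M.restrict_eRk_eq hXR
  rwa [← coe_mRank, ← coe_mRank, Nat.cast_inj] at this

end Rank

section Flat

lemma IsFlat.inter (hF : M.IsFlat F) (hF' : M.IsFlat F') : M.IsFlat (F ∩ F') := by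
  rw [inter_eq_iInter]
  exact IsFlat.iInter (by rintro (_ | _) <;> assumption)

lemma restrict_isFlat_iff (hH : M.IsFlat H) : (M ↾ H).IsFlat F ↔ M.IsFlat F ∧ F ⊆ H := by
  rw [isFlat_iff_closure_eq, isFlat_iff_closure_eq, restrict_closure_eq',
    sdiff_eq_empty.2 hH.subset_ground, union_empty]
  refine ⟨fun h ↦ ?_, fun ⟨h, hFH⟩ ↦ by rw [inter_eq_self_of_subset_left hFH, h,
    inter_eq_self_of_subset_left hFH]⟩
  have hFH : F ⊆ H := h ▸ inter_subset_right
  rw [inter_eq_self_of_subset_left hFH, inter_eq_self_of_subset_left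
    (hH.closure ▸ M.closure_subset_closure hFH)] at h
  exact ⟨h, hFH⟩

/-- The exchange property: a point of `H` spanned by `G ∪ {a}` but not by `G` would put `a`
in the closure of `H`. -/
lemma IsFlat.inter_closure_insert_eq (hH : M.IsFlat H) (hG : M.IsFlat G) (hGH : G ⊆ H)
    (ha : a ∉ H) : H ∩ M.closure (insert a G) = G := by
  refine subset_antisymm (fun x ⟨hxH, hxa⟩ ↦ by_contra fun hxG ↦ ha ?_)
    (subset_inter hGH (M.subset_closure_of_subset' (subset_insert a G) hG.subset_ground))
  have hax := (closure_exchange ⟨hxa, hG.closure.symm ▸ hxG⟩).1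
  exact hH.closure ▸ M.closure_subset_closure (insert_subset hxH hGH) hax

lemma IsFlat.inter_closure_singleton_eq_loops (hH : M.IsFlat H) (ha : a ∉ H) :
    H ∩ M.closure {a} = M.loops := by
  have := hH.inter_closure_insert_eq (isFlat_closure ∅) hH.loops_subset ha
  rwa [closure_insert_closure_eq_closure_insert, insert_empty_eq] at this

lemma IsFlat.inter_closure_pair_subset (hH : M.IsFlat H) (hF : M.IsFlat F) (hFH : F ⊆ H)
    (ha : a ∈ M.E \ H) (hb : b ∈ M.closure (insert a F)) : H ∩ M.closure {a, b} ⊆ F := by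
  have hab : M.closure {a, b} ⊆ M.closure (insert a F) :=
    M.closure_subset_closure_of_subset_closure (insert_subset
      (M.mem_closure_of_mem (mem_insert a F) (insert_subset ha.1 hF.subset_ground))
      (singleton_subset_iff.2 hb))
  exact (inter_subset_inter_right H hab).trans (hH.inter_closure_insert_eq hF hFH ha.2).subset

/-- Each line through a point `a ∉ H` meets `H` in a flat of rank at most one, so it lies in one
of two flats covering `H`. -/
lemma IsFlat.inter_closure_pair_subset_or (hH : M.IsFlat H) (ha : a ∈ M.E \ H)
    (hF₁ : M.IsFlat F₁) (hF₂ : M.IsFlat F₂) (hcover : F₁ ∪ F₂ = H) :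
    H ∩ M.closure {a, b} ⊆ F₁ ∨ H ∩ M.closure {a, b} ⊆ F₂ := by
  refine or_iff_not_imp_left.2 fun h ↦ ?_
  obtain ⟨w, ⟨hwH, hwab⟩, hwF⟩ := not_subset.1 h
  have hwF₂ : w ∈ F₂ := (hcover ▸ hwH).resolve_left hwF
  have hwa : w ∉ M.closure {a} := fun hwa ↦
    hwF (hF₁.loops_subset (hH.inter_closure_singleton_eq_loops ha.2 ▸ ⟨hwH, hwa⟩))
  have hbw : b ∈ M.closure (insert w {a}) :=
    (closure_exchange ⟨by rwa [pair_comm] at hwab, hwa⟩).1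
  refine hH.inter_closure_pair_subset hF₂ (hcover ▸ subset_union_right) ha ?_
  exact M.closure_subset_closure (insert_subset (mem_insert_of_mem a hwF₂) (by simp)) hbw

lemma IsFlat.projUnion_subset_iff (hH : M.IsFlat H) (hF : M.IsFlat F) :
    M.projUnion H (M.E \ H) ⊆ F ↔ ∀ a ∈ M.E \ H, ∀ b ∈ M.E \ H, H ∩ M.closure {a, b} ⊆ F := by
  simp only [projUnion, iUnion_subset_iff]
  refine ⟨fun h a ha b hb ↦ ?_, fun h a ha b hb _ ↦ h a ha b hb⟩
  by_cases hab : M.closure {a} = M.closure {b}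
  · have hba : b ∈ M.closure {a} := hab ▸ M.mem_closure_self b hb.1
    rw [pair_comm, closure_insert_eq_of_mem_closure hba, hH.inter_closure_singleton_eq_loops ha.2]
    exact hF.loops_subset
  · exact h a ha b hb hab

end Flat

section ModularHyperplane

lemma IsHyperplane.nonempty_sdiff (hH : M.IsHyperplane H) : (M.E \ H).Nonempty := by
  rw [nonempty_iff_ne_empty, Ne, sdiff_eq_empty]
  intro hEH
  have := hH.2
  rw [mRk, hEH.antisymm hH.1.subset_ground] at this
  omega

variable [M.RankFinite]

/-- Modularity of `H` gives `r (H ∩ K) + 1 = r K`, so `a` and `H ∩ K` already span `K`. -/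
lemma IsHyperplane.closure_insert_inter_eq (hH : M.IsHyperplane H) (hmod : M.IsModularFlat H)
    (hK : M.IsFlat K) (ha : a ∈ K \ H) : M.closure (insert a (H ∩ K)) = K := by
  have haE : a ∈ M.E := hK.subset_ground ha.1
  have hHK : M.mRank (H ∪ K) ≤ M.mRk :=
    mRank_mono (union_subset hH.1.subset_ground hK.subset_ground)
  have hHa : M.mRank (insert a H) = M.mRank H + 1 :=
    mRank_insert_eq_add_one ⟨haE, by rw [hH.1.closure]; exact ha.2⟩
  have hHaK : M.mRank (insert a H) ≤ M.mRank (H ∪ K) :=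
    mRank_mono (insert_subset (Or.inr ha.1) subset_union_left)
  have hHKa : M.mRank (insert a (H ∩ K)) = M.mRank (H ∩ K) + 1 :=
    mRank_insert_eq_add_one ⟨haE, fun h ↦ ha.2 ((hH.1.inter hK).closure ▸ h).1⟩
  have := hmod.2 K hK
  have := hH.2
  exact (closure_eq_closure_of_subset_of_mRank_le (insert_subset ha.1 inter_subset_right)
    (by omega)).trans hK.closure

lemma IsHyperplane.mem_closure_insert_of_inter_closure_pair_subset (hH : M.IsHyperplane H)
    (hmod : M.IsModularFlat H) (ha : a ∈ M.E \ H) (hb : b ∈ M.E)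
    (hab : H ∩ M.closure {a, b} ⊆ F) : b ∈ M.closure (insert a F) := by
  have hb' : b ∈ M.closure {a, b} := M.mem_closure_of_mem' (mem_insert_of_mem a rfl) hb
  rw [← hH.closure_insert_inter_eq hmod (isFlat_closure _)
    ⟨M.mem_closure_of_mem' (mem_insert a _) ha.1, ha.2⟩] at hb'
  exact M.closure_subset_closure (insert_subset_insert hab) hb'

lemma IsHyperplane.inter_closure_pair_trans (hH : M.IsHyperplane H) (hmod : M.IsModularFlat H)
    (hF : M.IsFlat F) (hFH : F ⊆ H) (ha : a ∈ M.E \ H) (hb : b ∈ M.E \ H) (hc : c ∈ M.E)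
    (hab : H ∩ M.closure {a, b} ⊆ F) (hbc : H ∩ M.closure {b, c} ⊆ F) :
    H ∩ M.closure {a, c} ⊆ F := by
  have hbF : insert b F ⊆ M.closure (insert a F) :=
    insert_subset (hH.mem_closure_insert_of_inter_closure_pair_subset hmod ha hb.1 hab)
      (M.subset_closure_of_subset' (subset_insert a F) hF.subset_ground)
  exact hH.1.inter_closure_pair_subset hF hFH ha (M.closure_subset_closure_of_subset_closure hbF
    (hH.mem_closure_insert_of_inter_closure_pair_subset hmod hb hc hbc))

lemma IsHyperplane.projUnion_subset_or (hH : M.IsHyperplane H) (hmod : M.IsModularFlat H)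
    (hF₁ : M.IsFlat F₁) (hF₂ : M.IsFlat F₂) (hcover : F₁ ∪ F₂ = H) :
    M.projUnion H (M.E \ H) ⊆ F₁ ∨ M.projUnion H (M.E \ H) ⊆ F₂ := by
  rw [hH.1.projUnion_subset_iff hF₁, hH.1.projUnion_subset_iff hF₂]
  exact forall_or_forall_of_symm_of_trans
    (fun a ha _ _ ↦ hH.1.inter_closure_pair_subset_or ha hF₁ hF₂ hcover)
    (fun a b ↦ by rw [pair_comm]; exact id) (fun a b ↦ by rw [pair_comm]; exact id)
    (fun a ha b hb c hc ↦
      hH.inter_closure_pair_trans hmod hF₁ (hcover ▸ subset_union_left) ha hb hc.1)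
    (fun a ha b hb c hc ↦
      hH.inter_closure_pair_trans hmod hF₂ (hcover ▸ subset_union_right) ha hb hc.1)

lemma IsHyperplane.closure_insert_eq_union_sdiff (hH : M.IsHyperplane H)
    (hmod : M.IsModularFlat H) (hF : M.IsFlat F) (hFH : F ⊆ H)
    (hP : M.projUnion H (M.E \ H) ⊆ F) (ha : a ∈ M.E \ H) :
    M.closure (insert a F) = F ∪ (M.E \ H) := by
  refine subset_antisymm (fun x hx ↦ ?_) (union_subset ?_ fun b hb ↦ ?_)
  · by_cases hxH : x ∈ H
    · exact Or.inl ((hH.1.inter_closure_insert_eq hF hFH ha.2).subset ⟨hxH, hx⟩)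
    · exact Or.inr ⟨M.closure_subset_ground _ hx, hxH⟩
  · exact M.subset_closure_of_subset' (subset_insert a F) hF.subset_ground
  · exact hH.mem_closure_insert_of_inter_closure_pair_subset hmod ha hb.1
      ((hH.1.projUnion_subset_iff hF).1 hP a ha b hb)

end ModularHyperplane

section Modular

variable [M.RankFinite]

lemma IsModularFlat.mRank_add_mRank_of_restrict (hH : M.IsFlat H)
    (hG : (M ↾ H).IsModularFlat G) (hF' : M.IsFlat F') :
    M.mRank G + M.mRank (H ∩ F') = M.mRank (G ∪ (H ∩ F')) + M.mRank (G ∩ F') := by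
  have hGH := ((restrict_isFlat_iff hH).1 hG.1).2
  have := hG.2 (H ∩ F') ((restrict_isFlat_iff hH).2 ⟨hH.inter hF', inter_subset_left⟩)
  rwa [restrict_mRank_eq hGH, restrict_mRank_eq (inter_subset_left : H ∩ F' ⊆ H),
    restrict_mRank_eq (union_subset hGH inter_subset_left),
    restrict_mRank_eq (inter_subset_left.trans hGH), ← inter_assoc,
    inter_eq_self_of_subset_left hGH] at this

lemma IsModularFlat.of_restrict (hH : M.IsModularFlat H) (hG : (M ↾ H).IsModularFlat G) :
    M.IsModularFlat G := by
  obtain ⟨hGflat, hGH⟩ := (restrict_isFlat_iff hH.1).1 hG.1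
  refine ⟨hGflat, fun F' hF' ↦ ?_⟩
  have hGF' := hG.mRank_add_mRank_of_restrict hH.1 hF'
  have hHF' := hH.2 F' hF'
  have hsub := M.mRank_inter_add_mRank_union_le (G ∪ F') H
  rw [union_inter_distrib_right, inter_eq_self_of_subset_left hGH, inter_comm F' H,
    union_right_comm, union_eq_right.2 hGH] at hsub
  have := M.mRank_inter_add_mRank_union_le G F'
  omega

lemma IsFlat.isModularFlat_closure_insert (hH : M.IsFlat H) (hF : (M ↾ H).IsModularFlat F)
    (ha : a ∈ M.E \ H) (hspan : M.E \ H ⊆ M.closure (insert a F)) :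
    M.IsModularFlat (M.closure (insert a F)) := by
  obtain ⟨hFflat, hFH⟩ := (restrict_isFlat_iff hH).1 hF.1
  set K := M.closure (insert a F)
  have hKH_inter : K ∩ H = F := by
    rw [inter_comm]
    exact hH.inter_closure_insert_eq hFflat hFH ha.2
  have hKH_union : K ∪ H = M.E :=
    (union_subset (M.closure_subset_ground _) hH.subset_ground).antisymm fun x hx ↦
      (em (x ∈ H)).elim Or.inr fun hxH ↦ Or.inl (hspan ⟨hx, hxH⟩)
  have haF : a ∉ M.closure F := by
    rw [hFflat.closure]
    exact fun h ↦ ha.2 (hFH h)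
  have hrK : M.mRank K = M.mRank F + 1 := by
    rw [mRank_closure_eq, mRank_insert_eq_add_one ⟨ha.1, haF⟩]
  refine ⟨isFlat_closure _, fun F' hF' ↦ ?_⟩
  have hFF' := hF.mRank_add_mRank_of_restrict hH hF'
  -- `F'` is the union of its traces on `K` and on `H`, which meet in `F ∩ F'`
  have hsplit := M.mRank_inter_add_mRank_union_le (K ∩ F') (H ∩ F')
  rw [inter_inter_inter_comm, inter_self, hKH_inter, ← union_inter_distrib_right, hKH_union,
    inter_eq_self_of_subset_right hF'.subset_ground] at hsplit
  have haFF' : a ∉ M.closure (F ∪ (H ∩ F')) := fun h ↦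
    ha.2 (hH.closure ▸ M.closure_subset_closure (union_subset hFH inter_subset_left) h)
  have hextend : M.mRank (F ∪ (H ∩ F')) + 1 ≤ M.mRank (K ∪ F') := by
    rw [← mRank_insert_eq_add_one ⟨ha.1, haFF'⟩]
    refine mRank_mono (insert_subset (Or.inl (M.mem_closure_of_mem' (mem_insert a F) ha.1))
      (union_subset_union ?_ inter_subset_right))
    exact M.subset_closure_of_subset' (subset_insert a F) hFflat.subset_ground
  have := M.mRank_inter_add_mRank_union_le K F'
  omega

end Modular

section Cover

lemma VerticalCover.symm (h : M.VerticalCover F G) : M.VerticalCover G F :=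
  ⟨h.2.1, h.1, by rw [union_comm, h.2.2]⟩

lemma ModularCover.symm (h : M.ModularCover F G) : M.ModularCover G F :=
  ⟨h.1.symm, h.2.2, h.2.1⟩

variable [M.RankFinite]

lemma VerticalCover.union_sdiff_of_restrict (hH : M.IsHyperplane H) (hmod : M.IsModularFlat H)
    (hvc : (M ↾ H).VerticalCover F G) (hP : M.projUnion H (M.E \ H) ⊆ F) :
    M.VerticalCover (F ∪ (M.E \ H)) G := by
  obtain ⟨⟨hFr, hFH'⟩, ⟨hGr, -⟩, hFG⟩ := hvc
  rw [restrict_ground_eq] at hFH' hFG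
  obtain ⟨hF, hFH⟩ := (restrict_isFlat_iff hH.1).1 hFr
  obtain ⟨hG, hGH⟩ := (restrict_isFlat_iff hH.1).1 hGr
  obtain ⟨a, ha⟩ := hH.nonempty_sdiff
  refine ⟨⟨?_, fun h ↦ hFH' (hFH.antisymm fun x hx ↦ ?_)⟩,
    ⟨hG, fun h ↦ ha.2 (hGH (h ▸ ha.1))⟩, ?_⟩
  · rw [← hH.closure_insert_eq_union_sdiff hmod hF hFH hP ha]
    exact isFlat_closure _
  · have hxE : x ∈ F ∪ (M.E \ H) := by
      rw [h]
      exact hH.1.subset_ground hx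
    exact hxE.resolve_right fun hx' ↦ hx'.2 hx
  · rw [union_right_comm, hFG, union_sdiff_cancel hH.1.subset_ground]

lemma ModularCover.union_sdiff_of_restrict (hH : M.IsHyperplane H) (hmod : M.IsModularFlat H)
    (hmc : (M ↾ H).ModularCover F G) (hP : M.projUnion H (M.E \ H) ⊆ F) :
    M.ModularCover (F ∪ (M.E \ H)) G := by
  obtain ⟨hvc, hFmod, hGmod⟩ := hmc
  obtain ⟨hF, hFH⟩ := (restrict_isFlat_iff hH.1).1 hFmod.1
  obtain ⟨a, ha⟩ := hH.nonempty_sdiff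
  have hK := hH.closure_insert_eq_union_sdiff hmod hF hFH hP ha
  refine ⟨hvc.union_sdiff_of_restrict hH hmod hP, ?_, hmod.of_restrict hGmod⟩
  rw [← hK]
  exact hH.1.isModularFlat_closure_insert hFmod ha (hK ▸ subset_union_right)

end Cover

end Matroid

/-- Let `H` be a modular hyperplane with complementary cocircuit `C* = E(M) − H`, let
`(F₁, F₂)` be a vertical cover of `M ↾ H`, and let `P` be the union of projections onto `H`
of pairs of distinct rank-one flats in `C*`. Then `P ⊆ Fᵢ` for some `i`, and
`(Fᵢ ∪ C*, F₍₃₋ᵢ₎)` is a vertical cover of `M`; moreover if `(F₁, F₂)` is a modular cover of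
`M ↾ H` then `(Fᵢ ∪ C*, F₍₃₋ᵢ₎)` is a modular cover of `M`. -/
theorem verticalCover_extend_cocircuit {α : Type*} (M : Matroid α) [M.Finite]
    (H F₁ F₂ : Set α) (hH : M.IsHyperplane H) (hmod : M.IsModularFlat H)
    (hvc : (M ↾ H).VerticalCover F₁ F₂) :
    (M.projUnion H (M.E \ H) ⊆ F₁ ∧ M.VerticalCover (F₁ ∪ (M.E \ H)) F₂ ∧
      ((M ↾ H).ModularCover F₁ F₂ → M.ModularCover (F₁ ∪ (M.E \ H)) F₂)) ∨
    (M.projUnion H (M.E \ H) ⊆ F₂ ∧ M.VerticalCover (F₂ ∪ (M.E \ H)) F₁ ∧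
      ((M ↾ H).ModularCover F₁ F₂ → M.ModularCover (F₂ ∪ (M.E \ H)) F₁)) := by
  have hF₁ := ((restrict_isFlat_iff hH.1).1 hvc.1.1).1
  have hF₂ := ((restrict_isFlat_iff hH.1).1 hvc.2.1.1).1
  rcases hH.projUnion_subset_or hmod hF₁ hF₂ hvc.2.2 with hP | hP
  · exact Or.inl ⟨hP, hvc.union_sdiff_of_restrict hH hmod hP,
      fun hmc ↦ hmc.union_sdiff_of_restrict hH hmod hP⟩
  · exact Or.inr ⟨hP, hvc.symm.union_sdiff_of_restrict hH hmod hP,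
      fun hmc ↦ hmc.symm.union_sdiff_of_restrict hH hmod hP⟩
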